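/- Let v be a weight function satisfying the doubling condition with constant D, let g(x)=v(1-1/x), let A > 1, and define integers b_k by b_0 = 1 and b_{k+1} = min{ l ∈ ℕ : g(2^l) > A g(2^{b_k}) }. Let u(z) = Re ∑_{k=0}^∞ g(2^{b_k}) z^{2^{b_k}}. Then for every r ∈ [1/2, 1), ∫_0^{2π} |u(re^{iφ})|² dφ ≥ π v(r)² / (16 A² D²), and consequently there exists c > 0 such that ∫_0^{2π} |u(re^{iφ})| dφ ≥ c v(r) for all r ∈ [1/2, 1). -/

import Mathlib

/-!
Write `G l = g (2 ^ l) = v (1 - 2⁻ˡ)`. On the circle of radius `r`, `u` is the lacunary cosine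
series `∑ₖ aₖ cos (2 ^ b k • φ)` with `aₖ = G (b k) r ^ 2 ^ b k`, and by orthogonality
`∫ u (r e^{iφ}) cos (2 ^ b K • φ) dφ = π a_K` for every `K`; this one Fourier coefficient
bounds both `∫ u²` (Bessel) and `∫ |u|` from below. Choosing `K` with
`2 ^ b K ≤ 1 / (1 - r) < 2 ^ b (K + 1)` gives `r ^ 2 ^ b K ≥ 1 / 4`, while monotonicity,
doubling and the minimality of `b (K + 1)` give
`v r ≤ G (b (K + 1)) ≤ D G (b (K + 1) - 1) ≤ A D G (b K)`. Hence `v r ≤ 4 A D a_K`.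
-/

open Real Filter Set MeasureTheory

theorem integral_cos_int_mul_eq_zero {m : ℤ} (hm : m ≠ 0) :
    ∫ φ in (0)..(2 * π), cos (m * φ) = 0 := by
  have hm' : (m : ℝ) ≠ 0 := by exact_mod_cast hm
  rw [intervalIntegral.integral_comp_mul_left (fun x => cos x) hm', integral_cos, mul_zero,
    sin_zero, show (m : ℝ) * (2 * π) = (2 * m : ℤ) * π by push_cast; ring, sin_int_mul_pi]
  simp

theorem intervalIntegrable_cos_mul (c a b : ℝ) :
    IntervalIntegrable (fun φ => cos (c * φ)) volume a b :=
  (continuous_cos.comp (continuous_const_mul c)).intervalIntegrable _ _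

theorem integral_cos_nat_mul_mul_cos_nat_mul_of_ne {n m : ℕ} (h : n ≠ m) :
    ∫ φ in (0)..(2 * π), cos (n * φ) * cos (m * φ) = 0 := by
  have hsub := integral_cos_int_mul_eq_zero (m := n - m) (by omega)
  have hadd := integral_cos_int_mul_eq_zero (m := n + m) (by omega)
  push_cast at hsub hadd
  have hprod (φ : ℝ) :
      cos (n * φ) * cos (m * φ) = (cos ((n - m) * φ) + cos ((n + m) * φ)) / 2 := by
    rw [sub_mul, add_mul, cos_sub, cos_add]; ring
  simp_rw [hprod]
  rw [intervalIntegral.integral_div, intervalIntegral.integral_add (intervalIntegrable_cos_mul ..)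
    (intervalIntegrable_cos_mul ..), hsub, hadd]
  norm_num

theorem integral_cos_nat_mul_sq {n : ℕ} (hn : n ≠ 0) :
    ∫ φ in (0)..(2 * π), cos (n * φ) ^ 2 = π := by
  have h := integral_cos_int_mul_eq_zero (m := 2 * n) (by omega)
  push_cast at h
  simp_rw [cos_sq, ← mul_assoc]
  rw [intervalIntegral.integral_add intervalIntegrable_const
    ((intervalIntegrable_cos_mul ..).div_const 2)]
  simp [intervalIntegral.integral_div, h]; ring

theorem sq_integral_mul_cos_le {f : ℝ → ℝ} (hf : Continuous f) {n : ℕ} (hn : n ≠ 0) :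
    (∫ φ in (0)..(2 * π), f φ * cos (n * φ)) ^ 2 ≤
      π * ∫ φ in (0)..(2 * π), f φ ^ 2 := by
  set I := ∫ φ in (0)..(2 * π), f φ * cos (n * φ)
  have hsq : 0 ≤ ∫ φ in (0)..(2 * π), (f φ - I / π * cos (n * φ)) ^ 2 :=
    intervalIntegral.integral_nonneg (by positivity) fun φ _ => sq_nonneg _
  have hexpand (φ : ℝ) : (f φ - I / π * cos (n * φ)) ^ 2
      = (f φ ^ 2 - 2 * (I / π) * (f φ * cos (n * φ))) + (I / π) ^ 2 * cos (n * φ) ^ 2 := by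
    ring
  simp_rw [hexpand] at hsq
  rw [intervalIntegral.integral_add (by apply Continuous.intervalIntegrable; fun_prop)
      (by apply Continuous.intervalIntegrable; fun_prop),
    intervalIntegral.integral_sub (by apply Continuous.intervalIntegrable; fun_prop)
      (by apply Continuous.intervalIntegrable; fun_prop),
    intervalIntegral.integral_const_mul, intervalIntegral.integral_const_mul,
    integral_cos_nat_mul_sq hn] at hsq
  have hπ := pi_pos
  field_simp at hsq
  nlinarith

noncomputable def cosSeries (a : ℕ → ℝ) (n : ℕ → ℕ) (φ : ℝ) : ℝ :=
  ∑' k, a k * cos (n k * φ)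

section CosSeries

variable {a : ℕ → ℝ} {n : ℕ → ℕ}

theorem norm_mul_cos_le (c x : ℝ) : ‖c * cos x‖ ≤ |c| := by
  rw [norm_mul, Real.norm_eq_abs, Real.norm_eq_abs]
  exact mul_le_of_le_one_right (abs_nonneg c) (abs_cos_le_one x)

theorem continuous_cosSeries (ha : Summable a) : Continuous (cosSeries a n) :=
  continuous_tsum (fun k => by fun_prop) ha.abs fun k φ => norm_mul_cos_le _ _

theorem integral_cosSeries_mul_cos (ha : Summable a) (hn : Function.Injective n) {K : ℕ}
    (hK : n K ≠ 0) :
    ∫ φ in (0)..(2 * π), cosSeries a n φ * cos (n K * φ) = π * a K := by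
  have hterm (k : ℕ) : ∫ φ in (0)..(2 * π), a k * cos (n k * φ) * cos (n K * φ)
      = if k = K then π * a K else 0 := by
    simp_rw [mul_assoc]
    rw [intervalIntegral.integral_const_mul]
    split_ifs with h
    · subst h; simp_rw [← sq, integral_cos_nat_mul_sq hK, mul_comm]
    · rw [integral_cos_nat_mul_mul_cos_nat_mul_of_ne (hn.ne h), mul_zero]
  have hsum := intervalIntegral.hasSum_integral_of_dominated_convergence
    (F := fun k φ => a k * cos (n k * φ) * cos (n K * φ))
    (f := fun φ => cosSeries a n φ * cos (n K * φ)) (μ := volume)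
    (a := 0) (b := 2 * π) (fun k _ => |a k|)
    (fun k => (by fun_prop : Continuous _).aestronglyMeasurable)
    (fun k => ae_of_all _ fun φ _ => (norm_mul _ _).trans_le <|
      (mul_le_of_le_one_right (norm_nonneg _) (abs_cos_le_one _)).trans (norm_mul_cos_le _ _))
    (ae_of_all _ fun _ _ => ha.abs) intervalIntegrable_const
    (ae_of_all _ fun φ _ =>
      (ha.abs.of_norm_bounded fun k => norm_mul_cos_le _ _).hasSum.mul_right _)
  simp_rw [hterm] at hsum
  exact hsum.unique (hasSum_ite_eq K _)

theorem mul_sq_le_integral_cosSeries_sq (ha : Summable a) (hn : Function.Injective n) {K : ℕ}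
    (hK : n K ≠ 0) : π * a K ^ 2 ≤ ∫ φ in (0)..(2 * π), cosSeries a n φ ^ 2 := by
  have h := sq_integral_mul_cos_le (continuous_cosSeries (n := n) ha) hK
  rw [integral_cosSeries_mul_cos ha hn hK, mul_pow, sq π, mul_assoc] at h
  exact le_of_mul_le_mul_left h pi_pos

theorem mul_le_integral_abs_cosSeries (ha : Summable a) (hn : Function.Injective n) {K : ℕ}
    (hK : n K ≠ 0) : π * a K ≤ ∫ φ in (0)..(2 * π), |cosSeries a n φ| := by
  have hU := continuous_cosSeries (n := n) ha
  rw [← integral_cosSeries_mul_cos ha hn hK]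
  refine intervalIntegral.integral_mono_on (by positivity)
    (by apply Continuous.intervalIntegrable; fun_prop)
    (by apply Continuous.intervalIntegrable; fun_prop) fun φ _ => ?_
  calc cosSeries a n φ * cos (n K * φ) ≤ |cosSeries a n φ * cos (n K * φ)| := le_abs_self _
    _ ≤ |cosSeries a n φ| := by
      rw [abs_mul]; exact mul_le_of_le_one_right (abs_nonneg _) (abs_cos_le_one _)

end CosSeries

theorem re_tsum_mul_pow_eq_cosSeries {c : ℕ → ℝ} {n : ℕ → ℕ} {r : ℝ}
    (hc : Summable fun k => c k * r ^ n k) (φ : ℝ) :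
    (∑' k, (c k : ℂ) * (r * Complex.exp (Complex.I * φ)) ^ n k).re
      = cosSeries (fun k => c k * r ^ n k) n φ := by
  have hterm (k : ℕ) : (c k : ℂ) * (r * Complex.exp (Complex.I * φ)) ^ n k
      = ((c k * r ^ n k : ℝ) : ℂ) * Complex.exp ((n k * φ : ℝ) * Complex.I) := by
    rw [mul_pow, ← Complex.exp_nat_mul]; push_cast; ring_nf
  simp_rw [hterm]
  rw [Complex.re_tsum (hc.abs.of_norm_bounded fun k => ?_)]
  · simp_rw [Complex.re_ofReal_mul, Complex.exp_ofReal_mul_I_re]; rfl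
  · rw [norm_mul, Complex.norm_exp_ofReal_mul_I, Complex.norm_real, Real.norm_eq_abs, mul_one]

theorem one_quarter_le_pow {r : ℝ} (hr : 1 / 2 ≤ r) {n : ℕ} (hn : n * (1 - r) ≤ 1) :
    1 / 4 ≤ r ^ n := by
  rcases le_total 1 r with hr1 | hr1
  · exact le_trans (by norm_num) (one_le_pow₀ hr1)
  have hbern : (1 / 4 : ℝ) ^ (1 - r) ≤ r := by
    have h := rpow_one_add_le_one_add_mul_self (s := -1 / 2) (p := 2 * (1 - r)) (by norm_num)
      (by linarith) (by linarith)
    rw [rpow_mul (by norm_num)] at h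
    norm_num at h ⊢
    linarith
  calc (1 / 4 : ℝ) = (1 / 4) ^ (1 : ℝ) := (rpow_one _).symm
    _ ≤ (1 / 4) ^ ((1 - r) * n) := rpow_le_rpow_of_exponent_ge (by norm_num) (by norm_num)
        (by linarith)
    _ = ((1 / 4) ^ (1 - r)) ^ n := by rw [rpow_mul (by norm_num), rpow_natCast]
    _ ≤ r ^ n := pow_le_pow_left₀ (by positivity) hbern n

theorem exists_le_lt_succ_of_tendsto_atTop {s : ℕ → ℝ} (hs : Tendsto s atTop atTop) {t : ℝ}
    (ht : s 0 ≤ t) : ∃ K, s K ≤ t ∧ t < s (K + 1) := by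
  classical
  have hex : ∃ k, t < s k := (hs.eventually_gt_atTop t).exists
  obtain ⟨K, hK⟩ : ∃ K, Nat.find hex = K + 1 :=
    Nat.exists_eq_succ_of_ne_zero fun h => (Nat.find_spec hex).not_ge (h ▸ ht)
  exact ⟨K, not_lt.1 (Nat.find_min hex (by omega)), hK ▸ Nat.find_spec hex⟩

theorem le_mul_pow_of_le_mul {f : ℕ → ℝ} {D : ℝ} (hD : 0 ≤ D)
    (hf : ∀ l, f (l + 1) ≤ D * f l) (l : ℕ) : f l ≤ f 0 * D ^ l := by
  induction l with
  | zero => simp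
  | succ l ih => calc
      f (l + 1) ≤ D * f l := hf l
      _ ≤ D * (f 0 * D ^ l) := mul_le_mul_of_nonneg_left ih hD
      _ = f 0 * D ^ (l + 1) := by ring

theorem summable_pow_mul_pow_two_pow (D : ℝ) {r : ℝ} (hr0 : 0 ≤ r) (hr1 : r < 1) :
    Summable fun l : ℕ => D ^ l * r ^ 2 ^ l := by
  have hlim : Tendsto (fun l : ℕ => |D| * r ^ 2 ^ l) atTop (nhds 0) := by
    simpa using ((tendsto_pow_atTop_nhds_zero_of_lt_one hr0 hr1).comp
      (tendsto_pow_atTop_atTop_of_one_lt one_lt_two)).const_mul |D|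
  refine summable_of_ratio_norm_eventually_le (r := 1 / 2) (by norm_num) ?_
  filter_upwards [hlim.eventually_lt_const (by norm_num : (0 : ℝ) < 1 / 2)] with l hl
  have hsplit : D ^ (l + 1) * r ^ 2 ^ (l + 1) = (D * r ^ 2 ^ l) * (D ^ l * r ^ 2 ^ l) := by
    rw [pow_succ 2 l, pow_mul]; ring
  rw [hsplit, norm_mul, Real.norm_eq_abs (D * _), abs_mul,
    abs_of_nonneg (by positivity : 0 ≤ r ^ 2 ^ l)]
  gcongr

theorem summable_comp_mul_pow_two_pow {G : ℕ → ℝ} {D : ℝ} (hG0 : ∀ l, 0 ≤ G l)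
    (hD : 0 ≤ D) (hG : ∀ l, G (l + 1) ≤ D * G l) {b : ℕ → ℕ} (hb : Function.Injective b)
    {r : ℝ} (hr0 : 0 ≤ r) (hr1 : r < 1) : Summable fun k => G (b k) * r ^ 2 ^ b k :=
  (((summable_pow_mul_pow_two_pow D hr0 hr1).mul_left (G 0)).comp_injective hb).of_nonneg_of_le
    (fun k => by have := hG0 (b k); positivity)
    fun k => by
      rw [Function.comp_apply, ← mul_assoc]
      exact mul_le_mul_of_nonneg_right (le_mul_pow_of_le_mul hD hG _) (by positivity)

section GreedySequence

variable {G : ℕ → ℝ} {A : ℝ} {b : ℕ → ℕ}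

theorem lt_apply_succ_of_eq_sInf (hG : Tendsto G atTop atTop)
    (hb : ∀ k, b (k + 1) = sInf {l | A * G (b k) < G l}) (k : ℕ) :
    A * G (b k) < G (b (k + 1)) := by
  rw [hb k]
  exact Nat.sInf_mem (hG.eventually_gt_atTop _).exists

theorem le_of_lt_apply_succ_of_eq_sInf (hb : ∀ k, b (k + 1) = sInf {l | A * G (b k) < G l})
    {k m : ℕ} (hm : m < b (k + 1)) : G m ≤ A * G (b k) := by
  rw [hb k] at hm
  simpa using Nat.notMem_of_lt_sInf hm

theorem strictMono_of_eq_sInf (hG : Monotone G) (hGtop : Tendsto G atTop atTop)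
    (hG0 : ∀ l, 0 ≤ G l) (hA : 1 ≤ A) (hb : ∀ k, b (k + 1) = sInf {l | A * G (b k) < G l}) :
    StrictMono b :=
  strictMono_nat_of_lt_succ fun k => hG.reflect_lt <|
    (le_mul_of_one_le_left (hG0 _) hA).trans_lt (lt_apply_succ_of_eq_sInf hGtop hb k)

end GreedySequence

section Weight

variable {v : ℝ → ℝ}

theorem one_sub_inv_two_pow_mem_Ico (l : ℕ) : 1 - ((2 : ℝ) ^ l)⁻¹ ∈ Ico (0 : ℝ) 1 :=
  ⟨by linarith [inv_le_one_of_one_le₀ (one_le_pow₀ (one_le_two (α := ℝ)) (n := l))],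
    by linarith [inv_pos.2 (pow_pos two_pos (M₀ := ℝ) l)]⟩

theorem MonotoneOn.comp_one_sub_inv_two_pow (hv : MonotoneOn v (Ico 0 1)) :
    Monotone fun l : ℕ => v (1 - ((2 : ℝ) ^ l)⁻¹) :=
  fun _ _ h => hv (one_sub_inv_two_pow_mem_Ico _) (one_sub_inv_two_pow_mem_Ico _) <|
    sub_le_sub_left (inv_anti₀ (by positivity) (pow_le_pow_right₀ one_le_two h)) 1

theorem Filter.Tendsto.comp_one_sub_inv_two_pow (hv : Tendsto v (nhdsWithin 1 (Iio 1)) atTop) :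
    Tendsto (fun l : ℕ => v (1 - ((2 : ℝ) ^ l)⁻¹)) atTop atTop := by
  refine hv.comp (tendsto_nhdsWithin_of_tendsto_nhds_of_eventually_within _ ?_
    (Eventually.of_forall fun l => (one_sub_inv_two_pow_mem_Ico l).2))
  simpa using (tendsto_inv_atTop_zero.comp
    (tendsto_pow_atTop_atTop_of_one_lt (one_lt_two (α := ℝ)))).const_sub 1

theorem le_mul_of_doubling {D : ℝ}
    (hdbl : ∀ d ∈ Ioc (0 : ℝ) (1 / 2), v (1 - d) ≤ D * v (1 - 2 * d)) (l : ℕ) :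
    v (1 - ((2 : ℝ) ^ (l + 1))⁻¹) ≤ D * v (1 - ((2 : ℝ) ^ l)⁻¹) := by
  have hd : ((2 : ℝ) ^ (l + 1))⁻¹ ∈ Ioc (0 : ℝ) (1 / 2) :=
    ⟨by positivity, by
      rw [pow_succ, mul_inv, one_div]
      exact mul_le_of_le_one_left (by norm_num)
        (inv_le_one_of_one_le₀ (one_le_pow₀ one_le_two))⟩
  convert hdbl _ hd using 4
  rw [pow_succ, mul_inv]; field_simp

end Weight

theorem exists_weight_le_mul_coeff {v : ℝ → ℝ} (hv0 : ∀ x ∈ Ico (0 : ℝ) 1, 0 ≤ v x)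
    (hv : MonotoneOn v (Ico 0 1)) {D : ℝ} (hD : 0 ≤ D)
    (hdbl : ∀ d ∈ Ioc (0 : ℝ) (1 / 2), v (1 - d) ≤ D * v (1 - 2 * d))
    {A : ℝ} (hA : 0 ≤ A) {b : ℕ → ℕ} (hb : StrictMono b) (hb0 : b 0 = 1)
    (hbrec : ∀ k, b (k + 1) =
      sInf {l | A * v (1 - ((2 : ℝ) ^ b k)⁻¹) < v (1 - ((2 : ℝ) ^ l)⁻¹)})
    {r : ℝ} (hr : r ∈ Ico (1 / 2 : ℝ) 1) :
    ∃ K, v r ≤ 4 * A * D * (v (1 - ((2 : ℝ) ^ b K)⁻¹) * r ^ 2 ^ b K) := by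
  set G : ℕ → ℝ := fun l => v (1 - ((2 : ℝ) ^ l)⁻¹)
  have hr1 : 0 < 1 - r := sub_pos.2 hr.2
  obtain ⟨K, hK, hK1⟩ := exists_le_lt_succ_of_tendsto_atTop (s := fun k => (2 : ℝ) ^ b k)
    (tendsto_pow_atTop_atTop_of_one_lt one_lt_two |>.comp hb.tendsto_atTop)
    (t := 1 / (1 - r)) (by rw [hb0, pow_one, le_div_iff₀ hr1]; linarith [hr.1])
  have hvr : v r ≤ G (b (K + 1)) := by
    refine hv ⟨by linarith [hr.1], hr.2⟩ (one_sub_inv_two_pow_mem_Ico _) ?_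
    rw [← one_div, le_sub_comm, one_div_le (by positivity) hr1]
    exact hK1.le
  obtain ⟨m, hm⟩ : ∃ m, b (K + 1) = m + 1 :=
    Nat.exists_eq_succ_of_ne_zero (hb.lt_iff_lt.2 K.lt_succ_self).ne_bot
  have hdouble : G (b (K + 1)) ≤ D * G m := hm ▸ le_mul_of_doubling hdbl m
  have hmin : G m ≤ A * G (b K) :=
    le_of_lt_apply_succ_of_eq_sInf (G := G) hbrec (by omega)
  have hpow : 1 / 4 ≤ r ^ 2 ^ b K :=
    one_quarter_le_pow hr.1 (by push_cast; rwa [← le_div_iff₀ hr1])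
  have hGK : 0 ≤ G (b K) := hv0 _ (one_sub_inv_two_pow_mem_Ico _)
  refine ⟨K, ?_⟩
  calc v r ≤ D * (A * G (b K)) := hvr.trans (hdouble.trans (mul_le_mul_of_nonneg_left hmin hD))
    _ = 4 * A * D * (G (b K) * (1 / 4)) := by ring
    _ ≤ 4 * A * D * (G (b K) * r ^ 2 ^ b K) := by gcongr

theorem stmt_17_general
    (v : ℝ → ℝ)
    (hv_pos : ∀ r ∈ Set.Ico (0:ℝ) 1, 0 < v r)
    (hv_mono : StrictMonoOn v (Set.Ico (0:ℝ) 1))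
    (hv_top : Filter.Tendsto v (nhdsWithin 1 (Set.Iio (1:ℝ))) Filter.atTop)
    (D : ℝ) (hD : 1 < D)
    (hdbl : ∀ d ∈ Set.Ioc (0:ℝ) (1/2:ℝ), v (1 - d) ≤ D * v (1 - 2*d))
    (g : ℝ → ℝ) (hg : ∀ x, g x = v (1 - 1/x))
    (A : ℝ) (hA : 1 < A)
    (b : ℕ → ℕ) (hb0 : b 0 = 1)
    (hbrec : ∀ k : ℕ, b (k+1) = sInf {l : ℕ | A * g ((2:ℝ) ^ (b k)) < g ((2:ℝ) ^ l)})
    (u : ℂ → ℝ)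
    (hu : ∀ z ∈ Metric.ball (0:ℂ) 1,
      u z = (∑' k : ℕ, (g ((2:ℝ) ^ (b k)) : ℂ) * z ^ (2 ^ (b k))).re) :
    (∀ r ∈ Set.Ico (1/2 : ℝ) 1,
      Real.pi * (v r) ^ 2 / (16 * A ^ 2 * D ^ 2) ≤
        ∫ φ in (0:ℝ)..(2 * Real.pi),
          (u ((r : ℂ) * Complex.exp (Complex.I * (φ : ℂ)))) ^ 2) ∧
    ∃ c > 0, ∀ r ∈ Set.Ico (1/2 : ℝ) 1,
      c * v r ≤
        ∫ φ in (0:ℝ)..(2 * Real.pi),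
          |u ((r : ℂ) * Complex.exp (Complex.I * (φ : ℂ)))| := by
  simp only [hg, one_div] at hbrec hu
  set G : ℕ → ℝ := fun l => v (1 - ((2 : ℝ) ^ l)⁻¹)
  have hG0 (l : ℕ) : 0 ≤ G l := (hv_pos _ (one_sub_inv_two_pow_mem_Ico l)).le
  have hb : StrictMono b := strictMono_of_eq_sInf (G := G)
    hv_mono.monotoneOn.comp_one_sub_inv_two_pow hv_top.comp_one_sub_inv_two_pow hG0 hA.le hbrec
  have hn : Function.Injective fun k => 2 ^ b k :=
    (Nat.pow_right_injective le_rfl).comp hb.injective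
  have hsum : ∀ r ∈ Ico (1 / 2 : ℝ) 1, Summable fun k => G (b k) * r ^ 2 ^ b k := fun r hr =>
    summable_comp_mul_pow_two_pow hG0 (by linarith) (le_mul_of_doubling hdbl) hb.injective
      (by linarith [hr.1]) hr.2
  have hu_eq : ∀ r ∈ Ico (1 / 2 : ℝ) 1, ∀ φ : ℝ, u (r * Complex.exp (Complex.I * φ))
      = cosSeries (fun k => G (b k) * r ^ 2 ^ b k) (fun k => 2 ^ b k) φ := fun r hr φ => by
    rw [hu _ (by simp [abs_of_nonneg (by linarith [hr.1] : 0 ≤ r), hr.2])]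
    exact re_tsum_mul_pow_eq_cosSeries (hsum r hr) φ
  have hcoeff := fun r (hr : r ∈ Ico (1 / 2 : ℝ) 1) =>
    exists_weight_le_mul_coeff (fun x hx => (hv_pos x hx).le) hv_mono.monotoneOn (by linarith)
      hdbl (by linarith) hb hb0 hbrec hr
  refine ⟨fun r hr => ?_, π / (4 * A * D), by positivity, fun r hr => ?_⟩ <;>
    obtain ⟨K, hK⟩ := hcoeff r hr <;> simp_rw [hu_eq r hr]
  · calc π * v r ^ 2 / (16 * A ^ 2 * D ^ 2) ≤ π * (G (b K) * r ^ 2 ^ b K) ^ 2 := by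
          rw [div_le_iff₀ (by positivity)]
          nlinarith [pow_le_pow_left₀ (hv_pos r ⟨by linarith [hr.1], hr.2⟩).le hK 2, pi_pos]
      _ ≤ _ := mul_sq_le_integral_cosSeries_sq (hsum r hr) hn (by positivity)
  · calc π / (4 * A * D) * v r ≤ π * (G (b K) * r ^ 2 ^ b K) := by
          rw [div_mul_eq_mul_div, div_le_iff₀ (by positivity)]
          nlinarith [pi_pos]
      _ ≤ _ := mul_le_integral_abs_cosSeries (hsum r hr) hn (by positivity)

theorem stmt_17
    (v : ℝ → ℝ)
    (hv_pos : ∀ r ∈ Set.Ico (0:ℝ) 1, 0 < v r)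
    (hv_mono : StrictMonoOn v (Set.Ico (0:ℝ) 1))
    (hv_cont : ContinuousOn v (Set.Ico (0:ℝ) 1))
    (hv_zero : v 0 = 1)
    (hv_top : Filter.Tendsto v (nhdsWithin 1 (Set.Iio (1:ℝ))) Filter.atTop)
    (D : ℝ) (hD : 1 < D)
    (hdbl : ∀ d ∈ Set.Ioc (0:ℝ) (1/2:ℝ), v (1 - d) ≤ D * v (1 - 2*d))
    (g : ℝ → ℝ) (hg : ∀ x, g x = v (1 - 1/x))
    (A : ℝ) (hA : 1 < A)
    (b : ℕ → ℕ) (hb0 : b 0 = 1)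
    (hbrec : ∀ k : ℕ, b (k+1) = sInf {l : ℕ | A * g ((2:ℝ) ^ (b k)) < g ((2:ℝ) ^ l)})
    (u : ℂ → ℝ)
    (hu : ∀ z ∈ Metric.ball (0:ℂ) 1,
      u z = (∑' k : ℕ, (g ((2:ℝ) ^ (b k)) : ℂ) * z ^ (2 ^ (b k))).re) :
    (∀ r ∈ Set.Ico (1/2 : ℝ) 1,
      Real.pi * (v r) ^ 2 / (16 * A ^ 2 * D ^ 2) ≤
        ∫ φ in (0:ℝ)..(2 * Real.pi),
          (u ((r : ℂ) * Complex.exp (Complex.I * (φ : ℂ)))) ^ 2) ∧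
    ∃ c > 0, ∀ r ∈ Set.Ico (1/2 : ℝ) 1,
      c * v r ≤
        ∫ φ in (0:ℝ)..(2 * Real.pi),
          |u ((r : ℂ) * Complex.exp (Complex.I * (φ : ℂ)))| :=
  stmt_17_general v hv_pos hv_mono hv_top D hD hdbl g hg A hA b hb0 hbrec u hu
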